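/- (Scaling invariance) For every horizon m ≥ 0, every μ ∈ ℝ, every n > 0 and every λ ∈ ℝ, the Gaussian one-armed-bandit value function satisfies V_m(μ, n, γ, τ, λ) = τ^{−1/2} · V_m(√τ·μ, n/τ, γ, 1, √τ·λ). -/

import Mathlib

open MeasureTheory ProbabilityTheory

/-! Measuring rewards in units of `c > 0` turns a `𝒩(μ, 1/n)` belief with observation precision `τ`
into a `𝒩(cμ, c²/n)` belief with precision `τ/c²`. The Gaussian predictive law and the conjugate
posterior update commute with this change of units, and `max`, the integral and the terminal payoff
are positively homogeneous, so by induction on the horizon `V` is multiplied by `c`.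
The theorem is the case `c = √τ`. -/

/-- Finite-horizon value function of the Gaussian one-armed bandit:
`V γ τ m μ n λ`, with discount `γ`, observation precision `τ`, horizon `m`,
posterior state `(μ, n)` and safe-arm reward `λ`. The expectation over the
next observation is taken under the Gaussian predictive distribution
`𝒩(μ, 1/n + 1/τ)`. -/
noncomputable def V (γ τ : ℝ) : ℕ → ℝ → ℝ → ℝ → ℝ
  | 0, μ, _n, lam => max (μ - lam) 0 / (1 - γ)
  | m + 1, μ, n, lam =>
      max (μ - lam + γ * ∫ y, V γ τ m ((n * μ + τ * y) / (n + τ)) (n + τ) lam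
        ∂(gaussianReal μ (1 / n + 1 / τ).toNNReal)) 0

lemma posterior_mean_rescale {c : ℝ} (hc : c ≠ 0) (μ n τ y : ℝ) :
    (n / c ^ 2 * (c * μ) + τ / c ^ 2 * (c * y)) / (n / c ^ 2 + τ / c ^ 2)
      = c * ((n * μ + τ * y) / (n + τ)) := by
  rw [← add_div, div_div_eq_mul_div, mul_div_assoc]
  field_simp

lemma gaussianReal_map_predictive_rescale (c μ n τ : ℝ) :
    (gaussianReal μ (1 / n + 1 / τ).toNNReal).map (c * ·)
      = gaussianReal (c * μ) (1 / (n / c ^ 2) + 1 / (τ / c ^ 2)).toNNReal := by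
  have hvar : 1 / (n / c ^ 2) + 1 / (τ / c ^ 2) = c ^ 2 * (1 / n + 1 / τ) := by
    simp only [one_div_div]
    ring
  rw [gaussianReal_map_const_mul, hvar, Real.toNNReal_mul (sq_nonneg c),
    Real.toNNReal_of_nonneg (sq_nonneg c)]

theorem V_rescale (γ τ : ℝ) {c : ℝ} (hc : 0 < c) :
    ∀ m : ℕ, ∀ μ n lam : ℝ,
      V γ (τ / c ^ 2) m (c * μ) (n / c ^ 2) (c * lam) = c * V γ τ m μ n lam := by
  intro m
  induction m with
  | zero =>
    intro μ n lam
    simp only [V]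
    rw [mul_div_assoc', mul_max_of_nonneg _ _ hc.le, mul_zero, mul_sub]
  | succ m ih =>
    intro μ n lam
    have hemb : MeasurableEmbedding (c * · : ℝ → ℝ) :=
      (Homeomorph.mulLeft₀ c hc.ne').toMeasurableEquiv.measurableEmbedding
    have hnext (y : ℝ) :
        V γ (τ / c ^ 2) m ((n / c ^ 2 * (c * μ) + τ / c ^ 2 * (c * y)) / (n / c ^ 2 + τ / c ^ 2))
            (n / c ^ 2 + τ / c ^ 2) (c * lam)
          = c * V γ τ m ((n * μ + τ * y) / (n + τ)) (n + τ) lam := by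
      rw [posterior_mean_rescale hc.ne', ← add_div, ih]
    simp only [V]
    rw [← gaussianReal_map_predictive_rescale, hemb.integral_map]
    simp only [hnext, integral_const_mul]
    rw [mul_max_of_nonneg _ _ hc.le, mul_zero]
    congr 1
    ring

theorem nmab_scaling_invariance_general (γ τ : ℝ)
    (hτ : 0 < τ) :
    ∀ m : ℕ, ∀ μ n lam : ℝ, 0 < n →
      V γ τ m μ n lam =
        (Real.sqrt τ)⁻¹ * V γ 1 m (Real.sqrt τ * μ) (n / τ) (Real.sqrt τ * lam) := by
  intro m μ n lam _
  have hsqrt : 0 < Real.sqrt τ := Real.sqrt_pos.mpr hτ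
  have h := V_rescale γ τ hsqrt m μ n lam
  rw [Real.sq_sqrt hτ.le, div_self hτ.ne'] at h
  rw [h, inv_mul_cancel_left₀ hsqrt.ne']

/-- Scaling invariance:
`V_m(μ, n, γ, τ, λ) = τ^{−1/2} · V_m(√τ·μ, n/τ, γ, 1, √τ·λ)`. -/
theorem nmab_scaling_invariance (γ τ : ℝ)
    (hγ0 : 0 ≤ γ) (hγ1 : γ < 1) (hτ : 0 < τ) :
    ∀ m : ℕ, ∀ μ n lam : ℝ, 0 < n →
      V γ τ m μ n lam =
        (Real.sqrt τ)⁻¹ * V γ 1 m (Real.sqrt τ * μ) (n / τ) (Real.sqrt τ * lam) :=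
  nmab_scaling_invariance_general γ τ hτ
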